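/- arXiv:2604.09971 — 4 statements merged into one kernel-verified Lean document; each statement's English description precedes it below -/
import Mathlib

section
/- Define G''_k = (-1)^{k+1}·{1}·S_k(x_1)·S_k(x_2) for all integers k, Q''_n = (1/2)·(G''_{n-1} + G''_{n-3} + ... + G''_{-n-1}) (the sum over G''_{n-2k-1} for k = 0,...,n), and U''_n = G''_n + x_1·x_2·G''_{n-1} - G''_{n-2} + (x_1² + x_2²)·Q''_{n-1} + 2·x_1·x_2·Q''_{n-2}. Then U''_n = 0 for all n ≥ 0. -/
open Polynomial

/-- Chebyshev polynomials of the second kind (nonnegative index):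
`S 0 = 1`, `S 1 = X`, `S (n+2) = X * S (n+1) - S n`. -/
noncomputable def chebS' : ℕ → Polynomial ℤ
  | 0 => 1
  | 1 => X
  | (n + 2) => X * chebS' (n + 1) - chebS' n

/-- Chebyshev polynomials of the first kind (nonnegative index):
`T 0 = 2`, `T 1 = X`, `T (n+2) = X * T (n+1) - T n`. -/
noncomputable def chebT' : ℕ → Polynomial ℤ
  | 0 => 2
  | 1 => X
  | (n + 2) => X * chebT' (n + 1) - chebT' n

/-- Chebyshev polynomials of the second kind extended to all integer indices,
characterized by `S n (u + u⁻¹) = (u^(n+1) - u^(-n-1))/(u - u⁻¹)`. -/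
noncomputable def chebS (n : ℤ) : Polynomial ℤ :=
  if 0 ≤ n then chebS' n.toNat else if n = -1 then 0 else - chebS' (-n - 2).toNat

/-- Chebyshev polynomials of the first kind extended to all integer indices,
characterized by `T n (u + u⁻¹) = u^n + u^(-n)`. -/
noncomputable def chebT (n : ℤ) : Polynomial ℤ :=
  if 0 ≤ n then chebT' n.toNat else chebT' (-n).toNat

/-- The ground ring `R̂ = ℤ[q^{±1}][x₁,x₂]`. -/
noncomputable abbrev Rhat : Type := MvPolynomial (Fin 2) (LaurentPolynomial ℤ)

/-- `{m} = q^(2m) - q^(-2m)` in `ℤ[q^{±1}]`. -/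
noncomputable def brk (m : ℤ) : LaurentPolynomial ℤ :=
  LaurentPolynomial.T (2 * m) - LaurentPolynomial.T (-(2 * m))

/-- `{m}` viewed in `R̂`. -/
noncomputable def brkR (m : ℤ) : Rhat := algebraMap (LaurentPolynomial ℤ) Rhat (brk m)

/-- `S_k(y)` as an element of `R̂[y]`. -/
noncomputable def Spoly (k : ℤ) : Polynomial Rhat := (chebS k).map (Int.castRingHom Rhat)

/-- `S_k(xᵢ)` as an element of `R̂`. -/
noncomputable def Sx (i : Fin 2) (k : ℤ) : Rhat := Polynomial.aeval (MvPolynomial.X i) (chebS k)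

/-- `G_k = {k+1}·S_k(y) + (-1)^(k+1)·{1}·S_k(x₁)·S_k(x₂)` in `R̂[y]`. -/
noncomputable def Gpoly (k : ℤ) : Polynomial Rhat :=
  Polynomial.C (brkR (k + 1)) * Spoly k +
    Polynomial.C (((Int.negOnePow (k + 1) : ℤ) : Rhat) * brkR 1 * Sx 0 k * Sx 1 k)

/-- `G''_k = (-1)^(k+1)·{1}·S_k(x₁)·S_k(x₂)` in `R̂`. -/
noncomputable def Gpp (k : ℤ) : Rhat :=
  ((Int.negOnePow (k + 1) : ℤ) : Rhat) * brkR 1 * Sx 0 k * Sx 1 k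

instance : NoZeroSMulDivisors ℤ (LaurentPolynomial ℤ) :=
  have : CharZero (LaurentPolynomial ℤ) :=
    charZero_of_injective_ringHom (Polynomial.toLaurent_injective (R := ℤ))
  IsAddTorsionFree.to_noZeroSMulDivisors_int

instance : NoZeroSMulDivisors ℤ Rhat :=
  have : CharZero (LaurentPolynomial ℤ) :=
    charZero_of_injective_ringHom (Polynomial.toLaurent_injective (R := ℤ))
  IsAddTorsionFree.to_noZeroSMulDivisors_int

lemma two_smul_cancel {x y : Rhat} (h : 2 • x = 2 • y) : x = y := by
  have h2 : (2:ℤ) • x = (2:ℤ) • y := by exact_mod_cast h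
  exact smul_right_injective Rhat (by norm_num : (2:ℤ) ≠ 0) h2

lemma chebS'_zero : chebS' 0 = 1 := rfl
lemma chebS'_one : chebS' 1 = X := rfl
lemma chebS'_add_two (n : ℕ) : chebS' (n + 2) = X * chebS' (n + 1) - chebS' n := rfl

lemma chebS_rec (k : ℤ) : chebS k = X * chebS (k - 1) - chebS (k - 2) := by
  rcases le_or_gt 2 k with h | h
  · obtain ⟨m, rfl⟩ : ∃ m : ℕ, k = (m : ℤ) + 2 := ⟨(k-2).toNat, by omega⟩
    have h1 : ((m:ℤ) + 2).toNat = m + 2 := by omega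
    have h2 : ((m:ℤ) + 2 - 1).toNat = m + 1 := by omega
    have h3 : ((m:ℤ) + 2 - 2).toNat = m := by omega
    simp only [chebS, if_pos (by omega : (0:ℤ) ≤ (m:ℤ)+2), if_pos (by omega : (0:ℤ) ≤ (m:ℤ)+2-1),
      if_pos (by omega : (0:ℤ) ≤ (m:ℤ)+2-2), h1, h2, h3]
    exact chebS'_add_two m
  · rcases le_or_gt (-1) k with h' | h'
    · interval_cases k <;>
        simp [chebS, chebS'_zero, chebS'_one]
    · obtain ⟨m, rfl⟩ : ∃ m : ℕ, k = -(m : ℤ) - 2 := ⟨(-k-2).toNat, by omega⟩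
      have h1 : (-(-(m:ℤ) - 2) - 2).toNat = m := by omega
      have h2 : (-(-(m:ℤ) - 2 - 1) - 2).toNat = m + 1 := by omega
      have h3 : (-(-(m:ℤ) - 2 - 2) - 2).toNat = m + 2 := by omega
      simp only [chebS, if_neg (by omega : ¬ (0:ℤ) ≤ -(m:ℤ)-2),
        if_neg (by omega : ¬ (0:ℤ) ≤ -(m:ℤ)-2-1),
        if_neg (by omega : ¬ (0:ℤ) ≤ -(m:ℤ)-2-2), if_neg (by omega : (-(m:ℤ)-2) ≠ -1),
        if_neg (by omega : (-(m:ℤ)-2-1) ≠ -1), if_neg (by omega : (-(m:ℤ)-2-2) ≠ -1), h1, h2, h3]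
      rw [chebS'_add_two]
      ring

lemma chebS_neg (k : ℤ) : chebS (-k - 2) = -chebS k := by
  rcases le_or_gt 0 k with h | h
  · have h1 : ¬ (0:ℤ) ≤ -k - 2 := by omega
    have h2 : (-k-2 : ℤ) ≠ -1 := by omega
    have h3 : (-(-k-2) - 2).toNat = k.toNat := by omega
    simp only [chebS, if_pos h, if_neg h1, if_neg h2, h3]
  · rcases eq_or_lt_of_le (by omega : k ≤ -1) with h' | h'
    · subst h'
      norm_num [chebS]
    · have h1 : (0:ℤ) ≤ -k - 2 := by omega
      have h2 : ¬ (0:ℤ) ≤ k := by omega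
      have h3 : k ≠ -1 := by omega
      simp only [chebS, if_pos h1, if_neg h2, if_neg h3, neg_neg]

lemma chebS_zero : chebS 0 = 1 := by simp [chebS, chebS'_zero]
lemma chebS_one : chebS 1 = X := by simp [chebS]; rfl
lemma chebS_neg_one : chebS (-1) = 0 := by simp [chebS]
lemma chebS_neg_two : chebS (-2) = -1 := by
  have := chebS_neg 0
  norm_num [chebS_zero] at this
  exact this

lemma Sx_rec (i : Fin 2) (k : ℤ) :
    Sx i k = MvPolynomial.X i * Sx i (k - 1) - Sx i (k - 2) := by
  unfold Sx
  rw [chebS_rec k]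
  simp [map_sub, map_mul, Polynomial.aeval_X]

lemma Sx_neg (i : Fin 2) (k : ℤ) : Sx i (-k - 2) = -Sx i k := by
  unfold Sx; rw [chebS_neg k]; simp

lemma Sx_zero (i : Fin 2) : Sx i 0 = 1 := by unfold Sx; rw [chebS_zero]; simp
lemma Sx_one (i : Fin 2) : Sx i 1 = MvPolynomial.X i := by unfold Sx; rw [chebS_one]; simp
lemma Sx_neg_one (i : Fin 2) : Sx i (-1) = 0 := by unfold Sx; rw [chebS_neg_one]; simp
lemma Sx_neg_two (i : Fin 2) : Sx i (-2) = -1 := by unfold Sx; rw [chebS_neg_two]; simp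

lemma negOnePow_cast_add_one (j : ℤ) :
    ((Int.negOnePow (j + 1) : ℤ) : Rhat) = -((Int.negOnePow j : ℤ) : Rhat) := by
  rw [Int.negOnePow_succ]
  push_cast
  ring

lemma negOnePow_cast_add_two (j : ℤ) :
    ((Int.negOnePow (j + 2) : ℤ) : Rhat) = ((Int.negOnePow j : ℤ) : Rhat) := by
  rw [show j + 2 = (j + 1) + 1 by ring, negOnePow_cast_add_one, negOnePow_cast_add_one]
  ring

lemma negOnePow_cast_neg (j : ℤ) :
    ((Int.negOnePow (-j) : ℤ) : Rhat) = ((Int.negOnePow j : ℤ) : Rhat) := by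
  rw [Int.negOnePow_neg]

lemma Gpp_neg_one : Gpp (-1) = 0 := by
  simp [Gpp, Sx_neg_one]

lemma Gpp_symm (k : ℤ) : Gpp (-k - 2) = Gpp k := by
  unfold Gpp
  rw [Sx_neg, Sx_neg, show -k - 2 + 1 = -(k + 1) by ring, negOnePow_cast_neg]
  ring

/-- The core Chebyshev identity. -/
lemma key (k : ℤ) :
    Gpp (k + 2) + Gpp (k - 2) +
      ((MvPolynomial.X 0 : Rhat) ^ 2 + (MvPolynomial.X 1) ^ 2 - 2) * Gpp k +
      MvPolynomial.X 0 * MvPolynomial.X 1 * (Gpp (k + 1) + Gpp (k - 1)) = 0 := by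
  have r : ∀ (i : Fin 2) (j : ℤ), Sx i (j + 2) = MvPolynomial.X i * Sx i (j + 1) - Sx i j := by
    intro i j
    have := Sx_rec i (j + 2)
    rw [show j + 2 - 1 = j + 1 by ring, show j + 2 - 2 = j by ring] at this
    exact this
  have h2 := r 0 k
  have h2' := r 1 k
  have h1 : Sx 0 (k + 1) = MvPolynomial.X 0 * Sx 0 k - Sx 0 (k - 1) := by
    have := r 0 (k - 1); rw [show k - 1 + 2 = k + 1 by ring, show k - 1 + 1 = k by ring] at this
    exact this
  have h1' : Sx 1 (k + 1) = MvPolynomial.X 1 * Sx 1 k - Sx 1 (k - 1) := by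
    have := r 1 (k - 1); rw [show k - 1 + 2 = k + 1 by ring, show k - 1 + 1 = k by ring] at this
    exact this
  have h0 : Sx 0 k = MvPolynomial.X 0 * Sx 0 (k - 1) - Sx 0 (k - 2) := Sx_rec 0 k
  have h0' : Sx 1 k = MvPolynomial.X 1 * Sx 1 (k - 1) - Sx 1 (k - 2) := Sx_rec 1 k
  have c3 : ((Int.negOnePow (k + 2 + 1) : ℤ) : Rhat) = ((Int.negOnePow (k + 1) : ℤ) : Rhat) := by
    rw [show k + 2 + 1 = (k + 1) + 2 by ring, negOnePow_cast_add_two]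
  have c2 : ((Int.negOnePow (k + 1 + 1) : ℤ) : Rhat) = -((Int.negOnePow (k + 1) : ℤ) : Rhat) :=
    negOnePow_cast_add_one (k + 1)
  have c0 : ((Int.negOnePow (k - 1 + 1) : ℤ) : Rhat) = -((Int.negOnePow (k + 1) : ℤ) : Rhat) := by
    rw [show k - 1 + 1 = k by ring, negOnePow_cast_add_one k]
    ring
  have cm : ((Int.negOnePow (k - 2 + 1) : ℤ) : Rhat) = ((Int.negOnePow (k + 1) : ℤ) : Rhat) := by
    rw [show k - 2 + 1 = k - 1 by ring, show k + 1 = (k - 1) + 2 by ring, negOnePow_cast_add_two]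
  unfold Gpp
  rw [c3, c2, c0, cm, h2, h2', h1, h1', h0, h0']
  ring

/-- with `Q''_m` the half of `∑_{k=0}^m G''_{m-2k-1}` (and `Q''_m = 0` for
`m < 0`), we have `U''_n = G''_n + x₁x₂·G''_{n-1} - G''_{n-2} + (x₁²+x₂²)·Q''_{n-1}
+ 2x₁x₂·Q''_{n-2} = 0` for all `n ≥ 0`. -/
theorem Upp_eq_zero (Q : ℤ → Rhat)
    (hQ : ∀ m : ℤ, 0 ≤ m →
      2 • Q m = ∑ k ∈ Finset.range (m.toNat + 1), Gpp (m - 2 * (k : ℤ) - 1))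
    (hQneg : ∀ m : ℤ, m < 0 → Q m = 0) (n : ℤ) (hn : 0 ≤ n) :
    Gpp n + MvPolynomial.X 0 * MvPolynomial.X 1 * Gpp (n - 1) - Gpp (n - 2) +
      ((MvPolynomial.X 0) ^ 2 + (MvPolynomial.X 1) ^ 2) * Q (n - 1) +
      2 * (MvPolynomial.X 0 * MvPolynomial.X 1) * Q (n - 2) = 0 := by
  have hQ0 : Q 0 = 0 := by
    apply two_smul_cancel
    rw [hQ 0 le_rfl]
    norm_num [Finset.sum_range_one, Gpp_neg_one]
  have hGm2 : Gpp (-2) = Gpp 0 := by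
    have := Gpp_symm 0; norm_num at this; exact this
  have hQrec : ∀ m : ℤ, 0 ≤ m → Q m = Q (m - 2) + Gpp (m - 1) := by
    intro m hm
    rcases lt_or_ge m 2 with hm2 | hm2
    · interval_cases m
      · norm_num [hQ0, hQneg (-2) (by norm_num), Gpp_neg_one]
      · apply two_smul_cancel
        rw [hQ 1 (by norm_num)]
        norm_num [Finset.sum_range_succ, Finset.sum_range_one, hQneg (-1) (by norm_num), hGm2]
        ring
    · apply two_smul_cancel
      obtain ⟨t, rfl⟩ : ∃ t : ℕ, m = (t : ℤ) + 2 := ⟨(m - 2).toNat, by omega⟩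
      have ht1 : ((t:ℤ) + 2).toNat = t + 2 := by omega
      have ht2 : ((t:ℤ) + 2 - 2).toNat = t := by omega
      rw [hQ _ hm, ht1, Finset.sum_range_succ', Finset.sum_range_succ]
      have e1 : ∀ i : ℕ, Gpp ((t:ℤ) + 2 - 2 * ((i:ℤ) + 1) - 1) = Gpp ((t:ℤ) - 2 * (i:ℤ) - 1) := by
        intro i; congr 1; ring
      have e2 : ∑ i ∈ Finset.range (t + 1), Gpp ((t:ℤ) + 2 - 2 * (((i:ℕ) + 1 : ℕ) : ℤ) - 1)
          = 2 • Q ((t:ℤ) + 2 - 2) := by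
        rw [hQ ((t:ℤ) + 2 - 2) (by omega), ht2]
        apply Finset.sum_congr rfl
        intro i _
        push_cast
        congr 1
        ring
      rw [e2]
      have symm' : ∀ a b : ℤ, a = -b - 2 → Gpp a = Gpp b := by
        intro a b h; rw [h, Gpp_symm]
      have e3 : Gpp ((t:ℤ) + 2 - 2 * (((t + 1 + 1 : ℕ) : ℤ)) - 1) = Gpp ((t:ℤ) + 2 - 1) :=
        symm' _ _ (by push_cast; ring)
      have e4 : Gpp ((t:ℤ) + 2 - 2 * ((0:ℕ):ℤ) - 1) = Gpp ((t:ℤ) + 2 - 1) := by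
        norm_num
      rw [e3, e4, smul_add]
      abel
  -- main induction
  obtain ⟨N, rfl⟩ := Int.eq_ofNat_of_zero_le hn
  induction N using Nat.strong_induction_on with
  | _ N ih =>
    match N with
    | 0 =>
      norm_num [hQneg (-1) (by norm_num), hQneg (-2) (by norm_num), Gpp_neg_one, hGm2]
    | 1 =>
      norm_num [hQneg (-1) (by norm_num), hQ0, Gpp_neg_one]
      show Gpp 1 + MvPolynomial.X 0 * MvPolynomial.X 1 * Gpp 0 = 0
      unfold Gpp
      rw [Sx_one, Sx_one, Sx_zero, Sx_zero]
      have v2 : ((Int.negOnePow 2 : ℤ) : Rhat) = 1 := by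
        rw [Int.negOnePow_even 2 ⟨1, by ring⟩]; push_cast; ring
      have v1 : ((Int.negOnePow 1 : ℤ) : Rhat) = -1 := by
        rw [Int.negOnePow_one]; push_cast; ring
      rw [show (1:ℤ) + 1 = 2 by norm_num, show (0:ℤ) + 1 = 1 by norm_num, v2, v1]
      ring
    | (t + 2) =>
      have hU := ih t (by omega) (by positivity)
      push_cast
      set k : ℤ := (t : ℤ) with hk
      rw [show k + 2 - 1 = k + 1 by ring, show k + 2 - 2 = k by ring]
      have q1 : Q (k + 1) = Q (k - 1) + Gpp k := by
        have := hQrec (k + 1) (by positivity)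
        rw [show k + 1 - 2 = k - 1 by ring, show k + 1 - 1 = k by ring] at this
        exact this
      have q2 : Q k = Q (k - 2) + Gpp (k - 1) := hQrec k (by positivity)
      rw [q1, q2]
      have hkey := key k
      linear_combination hU + hkey
end

section
/- Let R̂ = Z[q^{±1}][x_1,x_2], G ⊂ R̂[y] the R̂-span of {G_n : n ≥ 1} with G_n = {n+1}·S_n(y) + (-1)^{n+1}·{1}·S_n(x_1)·S_n(x_2), and R^{[0]} the image of R̂ in M := R̂[y]/G. Then the quotient M/R^{[0]} is isomorphic as an R̂-module to the direct sum over n ≥ 1 of R̂/(q^{2n+2} - q^{-2n-2}). -/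
open Polynomial

open DirectSum

/-- The submodule `G ⊂ R̂[y]` spanned by `{G_n : n ≥ 1}`. -/
noncomputable def Gsub : Submodule Rhat (Polynomial Rhat) :=
  Submodule.span Rhat (Set.range (fun n : ℕ+ => Gpoly (n : ℕ)))

lemma chebS'_monic_deg : ∀ n : ℕ, (chebS' n).Monic ∧ (chebS' n).natDegree = n := by
  intro n
  induction n using Nat.strong_induction_on with
  | _ n ih =>
    match n with
    | 0 => exact ⟨by simp [chebS', monic_one], by simp [chebS']⟩
    | 1 => exact ⟨by simp [chebS', monic_X], by simp [chebS']⟩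
    | (m + 2) =>
      obtain ⟨h1, d1⟩ := ih (m + 1) (by omega)
      obtain ⟨h0, d0⟩ := ih m (by omega)
      have hmul : (X * chebS' (m + 1)).Monic := monic_X.mul h1
      have hdmul : (X * chebS' (m + 1)).natDegree = m + 2 := by
        rw [natDegree_mul X_ne_zero h1.ne_zero, natDegree_X, d1]; omega
      have hlt : (chebS' m).natDegree < (X * chebS' (m + 1)).natDegree := by omega
      constructor
      · rw [show chebS' (m + 2) = X * chebS' (m + 1) - chebS' m from rfl]
        rw [sub_eq_add_neg]
        refine hmul.add_of_left ?_
        rw [degree_neg]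
        exact degree_lt_degree hlt
      · rw [show chebS' (m + 2) = X * chebS' (m + 1) - chebS' m from rfl]
        rw [natDegree_sub_eq_left_of_natDegree_lt hlt, hdmul]

/-- `S_n(y)` for natural `n`, in `R̂[y]`. -/
noncomputable def SN (n : ℕ) : Polynomial Rhat := (chebS' n).map (Int.castRingHom Rhat)

lemma Spoly_natCast (n : ℕ) : Spoly (n : ℤ) = SN n := by
  simp [Spoly, chebS, SN]

lemma SN_monic (n : ℕ) : (SN n).Monic := ((chebS'_monic_deg n).1).map _

lemma SN_natDegree (n : ℕ) : (SN n).natDegree = n := by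
  rw [SN, (chebS'_monic_deg n).1.natDegree_map, (chebS'_monic_deg n).2]

lemma SN_zero : SN 0 = 1 := by simp [SN, chebS']

lemma SN_coeff_self (n : ℕ) : (SN n).coeff n = 1 := by
  have := (SN_monic n).coeff_natDegree
  rwa [SN_natDegree] at this

lemma SN_coeff_of_lt {k n : ℕ} (h : k < n) : (SN n).coeff n = 1 := SN_coeff_self n

lemma SN_span_aux : ∀ (N : ℕ) (p : Polynomial Rhat), p.natDegree ≤ N →
    p ∈ Submodule.span Rhat (Set.range SN) := by
  intro N
  induction N with
  | zero =>
    intro p hp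
    have : p = p.coeff 0 • SN 0 := by
      rw [SN_zero, smul_eq_C_mul, mul_one]; exact eq_C_of_natDegree_le_zero hp
    rw [this]
    exact Submodule.smul_mem _ _ (Submodule.subset_span ⟨0, rfl⟩)
  | succ N ih =>
    intro p hp
    set c := p.coeff (N + 1) with hc
    have hmem : SN (N + 1) ∈ Submodule.span Rhat (Set.range SN) :=
      Submodule.subset_span ⟨N + 1, rfl⟩
    have hq : (p - c • SN (N + 1)).natDegree ≤ N := by
      apply natDegree_le_iff_coeff_eq_zero.mpr
      intro k hk
      rcases Nat.lt_or_ge (N + 1) k with h | h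
      · rw [coeff_sub, coeff_smul]
        rw [coeff_eq_zero_of_natDegree_lt (lt_of_le_of_lt hp h),
          coeff_eq_zero_of_natDegree_lt (by rw [SN_natDegree]; exact h)]
        simp
      · have hk' : k = N + 1 := by omega
        subst hk'
        rw [coeff_sub, coeff_smul, SN_coeff_self, smul_eq_mul, mul_one, sub_self]
    have := ih _ hq
    have : p = (p - c • SN (N + 1)) + c • SN (N + 1) := by ring
    rw [this]
    exact Submodule.add_mem _ (ih _ hq) (Submodule.smul_mem _ _ hmem)

lemma SN_li : LinearIndependent Rhat SN := by
  refine (linearIndependent_iff (R := Rhat) (v := SN)).mpr fun l hl => ?_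
  by_contra hne
  have hsupp : l.support.Nonempty := Finsupp.support_nonempty_iff.mpr hne
  set n := l.support.max' hsupp with hn
  have hnmem : n ∈ l.support := l.support.max'_mem hsupp
  have hcoeff : ((Finsupp.linearCombination Rhat SN) l).coeff n = l n := by
    rw [Finsupp.linearCombination_apply, Finsupp.sum, finset_sum_coeff]
    rw [Finset.sum_eq_single n]
    · rw [coeff_smul, SN_coeff_self, smul_eq_mul, mul_one]
    · intro i hi hine
      have : i < n := lt_of_le_of_ne (l.support.le_max' i hi) hine
      rw [coeff_smul, coeff_eq_zero_of_natDegree_lt (by rw [SN_natDegree]; exact this),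
        smul_zero]
    · intro h; exact absurd hnmem h
  rw [hl] at hcoeff
  simp at hcoeff
  exact Finsupp.mem_support_iff.mp hnmem hcoeff.symm

/-- The Chebyshev basis of `R̂[y]`. -/
noncomputable def bS : Module.Basis ℕ Rhat (Polynomial Rhat) :=
  Module.Basis.mk SN_li (by
    rw [top_le_iff, eq_top_iff]
    intro p _
    exact SN_span_aux p.natDegree p le_rfl)

lemma bS_apply (n : ℕ) : bS n = SN n := Module.Basis.mk_apply _ _ _

lemma bS_repr_smul_SN (n : ℕ) (c : Rhat) :
    bS.repr (c • SN n) = Finsupp.single n c := by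
  rw [← bS_apply, map_smul, Module.Basis.repr_self, Finsupp.smul_single, smul_eq_mul, mul_one]

/-- The target module. -/
noncomputable abbrev Tgt : Type :=
  ⨁ n : ℕ+, Rhat ⧸ Ideal.span {brkR ((n : ℕ) + 1)}

/-- Component maps. -/
noncomputable def phi (n : ℕ) : Rhat →ₗ[Rhat] Tgt :=
  if h : 0 < n then
    (DirectSum.lof Rhat ℕ+ (fun j : ℕ+ => Rhat ⧸ Ideal.span {brkR ((j : ℕ) + 1)}) ⟨n, h⟩)
      ∘ₗ (Ideal.span {brkR ((n : ℕ) + 1)} : Ideal Rhat).mkQ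
  else 0

lemma phi_zero : phi 0 = 0 := dif_neg (by omega)

lemma phi_pnat (i : ℕ+) (c : Rhat) :
    phi (i : ℕ) c = DirectSum.lof Rhat ℕ+ (fun j : ℕ+ => Rhat ⧸ Ideal.span {brkR ((j : ℕ) + 1)}) i
      ((Ideal.span {brkR ((i : ℕ) + 1)} : Ideal Rhat).mkQ c) := by
  obtain ⟨n, hn⟩ := i
  show phi n c = DirectSum.lof Rhat ℕ+ (fun j : ℕ+ => Rhat ⧸ Ideal.span {brkR ((j : ℕ) + 1)})
    ⟨n, hn⟩ ((Ideal.span {brkR ((n : ℕ) + 1)} : Ideal Rhat).mkQ c)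
  rw [phi, dif_pos hn]
  rfl

set_option synthInstance.maxHeartbeats 1000000 in
/-- The linear map. -/
noncomputable def fmap : Polynomial Rhat →ₗ[Rhat] Tgt :=
  (Finsupp.lsum Rhat phi).comp (bS.repr : Polynomial Rhat ≃ₗ[Rhat] (ℕ →₀ Rhat)).toLinearMap

lemma fmap_smul_SN (n : ℕ) (c : Rhat) : fmap (c • SN n) = phi n c := by
  rw [fmap, LinearMap.comp_apply, LinearEquiv.coe_toLinearMap, bS_repr_smul_SN,
    Finsupp.lsum_single]

set_option maxHeartbeats 2000000 in
lemma fmap_component (p : Polynomial Rhat) (i : ℕ+) :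
    DirectSum.component Rhat ℕ+ (fun j : ℕ+ => Rhat ⧸ Ideal.span {brkR ((j : ℕ) + 1)}) i (fmap p)
      = (Ideal.span {brkR ((i : ℕ) + 1)} : Ideal Rhat).mkQ (bS.repr p i) := by
  rw [fmap, LinearMap.comp_apply, LinearEquiv.coe_toLinearMap, Finsupp.lsum_apply,
    map_finsuppSum, Finsupp.sum]
  rw [Finset.sum_eq_single (i : ℕ)]
  · rw [phi_pnat, DirectSum.component.lof_self]
  · intro k hk hki
    match k with
    | 0 => rw [phi_zero]; simp
    | (m + 1) =>
      have : phi (m + 1) ((bS.repr p) (m + 1)) =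
          DirectSum.lof Rhat ℕ+ (fun j : ℕ+ => Rhat ⧸ Ideal.span {brkR ((j : ℕ) + 1)})
            (⟨m + 1, Nat.succ_pos m⟩ : ℕ+)
            ((Ideal.span {brkR ((m + 1 : ℕ) + 1)} : Ideal Rhat).mkQ ((bS.repr p) (m + 1))) :=
        phi_pnat ⟨m + 1, Nat.succ_pos m⟩ _
      erw [this, DirectSum.component.of, dif_neg]
      intro h
      exact hki (by simpa using congrArg (fun j : ℕ+ => (j : ℕ)) h)
  · intro h
    rw [Finsupp.notMem_support_iff.mp h, map_zero, map_zero]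

lemma Gpoly_nat (n : ℕ) : brkR ((n : ℤ) + 1) • SN n =
    Gpoly (n : ℤ) - Polynomial.C (((Int.negOnePow ((n : ℤ) + 1) : ℤ) : Rhat) * brkR 1 *
      Sx 0 (n : ℤ) * Sx 1 (n : ℤ)) := by
  rw [Gpoly, smul_eq_C_mul, Spoly_natCast]; ring

lemma fmap_C (c : Rhat) : fmap (Polynomial.C c) = 0 := by
  have h : Polynomial.C c = c • SN 0 := by rw [SN_zero, smul_eq_C_mul, mul_one]
  rw [h, fmap_smul_SN, phi_zero, LinearMap.zero_apply]

set_option maxHeartbeats 2000000 in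
/-- with `M = R̂[y]/G` and `R⁰` the image of `R̂` in `M`, the quotient
`M/R⁰` is isomorphic as an `R̂`-module to `⨁_{n ≥ 1} R̂/({n+1})`.  Equivalently
(first isomorphism theorem), there is a surjective `R̂`-linear map
`R̂[y] → ⨁_{n ≥ 1} R̂/({n+1})` whose kernel is `G + R̂·1`. -/
theorem quotient_by_constants_iso :
    ∃ f : Polynomial Rhat →ₗ[Rhat] (⨁ n : ℕ+, Rhat ⧸ Ideal.span {brkR ((n : ℕ) + 1)}),
      Function.Surjective f ∧
      LinearMap.ker f = Gsub ⊔ LinearMap.range (Algebra.linearMap Rhat (Polynomial Rhat)) := by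
  refine ⟨fmap, ?_, ?_⟩
  · -- surjectivity
    intro x
    induction x using DirectSum.induction_on with
    | zero => exact ⟨0, map_zero _⟩
    | of i y =>
      obtain ⟨r, rfl⟩ := Submodule.Quotient.mk_surjective _ y
      refine ⟨r • SN (i : ℕ), ?_⟩
      rw [fmap_smul_SN, phi_pnat, DirectSum.lof_eq_of]
      rfl
    | add x y hx hy =>
      obtain ⟨a, ha⟩ := hx
      obtain ⟨b, hb⟩ := hy
      exact ⟨a + b, by rw [map_add, ha, hb]⟩
  · apply le_antisymm
    · -- ker ≤ Gsub ⊔ range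
      intro p hp
      rw [LinearMap.mem_ker] at hp
      have hcomp : ∀ i : ℕ+, bS.repr p (i : ℕ) ∈
          (Ideal.span {brkR ((i : ℕ) + 1)} : Ideal Rhat) := by
        intro i
        have := fmap_component p i
        rw [hp, map_zero] at this
        rw [← Submodule.Quotient.mk_eq_zero, ← Submodule.mkQ_apply]
        exact this.symm
      have hrepr := bS.linearCombination_repr p
      rw [← hrepr, Finsupp.linearCombination_apply, Finsupp.sum]
      apply Submodule.sum_mem
      intro k _
      match k with
      | 0 =>
        apply Submodule.mem_sup_right
        refine ⟨bS.repr p 0, ?_⟩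
        rw [Algebra.linearMap_apply, Polynomial.algebraMap_eq, bS_apply, SN_zero,
          smul_eq_C_mul, mul_one]
      | (m + 1) =>
        obtain ⟨r, hr⟩ := Ideal.mem_span_singleton'.mp (hcomp ⟨m + 1, Nat.succ_pos m⟩)
        have hr' : r * brkR (((m + 1 : ℕ) : ℤ) + 1) = bS.repr p (m + 1) := hr
        rw [bS_apply, ← hr', mul_smul, Gpoly_nat]
        apply Submodule.smul_mem
        refine Submodule.sub_mem (R := Rhat) (M := Polynomial Rhat) _ ?_ ?_
        · apply Submodule.mem_sup_left
          exact Submodule.subset_span ⟨⟨m + 1, Nat.succ_pos m⟩, rfl⟩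
        · apply Submodule.mem_sup_right
          exact ⟨_, rfl⟩
    · -- Gsub ⊔ range ≤ ker
      apply sup_le
      · rw [Gsub, Submodule.span_le]
        rintro _ ⟨n, rfl⟩
        rw [SetLike.mem_coe, LinearMap.mem_ker]
        show fmap (Gpoly ((n : ℕ) : ℤ)) = 0
        have h1 : Gpoly ((n : ℕ) : ℤ) = brkR (((n : ℕ) : ℤ) + 1) • SN (n : ℕ) +
            Polynomial.C (((Int.negOnePow (((n : ℕ) : ℤ) + 1) : ℤ) : Rhat) * brkR 1 *
              Sx 0 ((n : ℕ) : ℤ) * Sx 1 ((n : ℕ) : ℤ)) := by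
          rw [Gpoly_nat]; ring
        rw [h1, map_add, fmap_smul_SN, fmap_C, add_zero, phi_pnat]
        have : ((Ideal.span {brkR ((n : ℕ) + 1)} : Ideal Rhat)).mkQ (brkR ((n : ℕ) + 1)) = 0 := by
          rw [Submodule.mkQ_apply, Submodule.Quotient.mk_eq_zero]
          exact Ideal.subset_span rfl
        rw [this, map_zero]
      · rintro _ ⟨r, rfl⟩
        rw [LinearMap.mem_ker, Algebra.linearMap_apply, Polynomial.algebraMap_eq]
        exact fmap_C r
end

section
/- Let M be a module over a principal ideal domain A whose torsion submodule Tor(M) is annihilated by a single nonzero element a ∈ A (i.e., has bounded order). Then Tor(M) is a direct summand of M, so M ≅ Tor(M) ⊕ M/Tor(M). -/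
open Submodule

section Aux

variable {A M : Type} [CommRing A] [IsDomain A] [IsPrincipalIdealRing A]
  [AddCommGroup M] [Module A M]

/-- Base case: if `T ≤ W`, `p` is prime, `p • T = 0` and `T ∩ pW = 0`, then `T` has a
complement in `W`.  Proved by Zorn's lemma. -/
lemma kaplansky_base (p : A) (hp : Prime p) (T W : Submodule A M) (hTW : T ≤ W)
    (hkill : ∀ t ∈ T, p • t = 0)
    (hint : ∀ x ∈ T, ∀ w ∈ W, x = p • w → x = 0) :
    ∃ N ≤ W, N ⊓ T = ⊥ ∧ N ⊔ T = W := by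
  -- the set of candidate submodules
  set S : Set (Submodule A M) :=
    {N | N ≤ W ∧ (∀ w ∈ W, p • w ∈ N) ∧ N ⊓ T = ⊥} with hS
  -- the starting point : p • W
  have hbase : W.map (LinearMap.lsmul A M p) ∈ S := by
    refine ⟨?_, ?_, ?_⟩
    · rintro x hx
      rcases Submodule.mem_map.1 hx with ⟨w, hw, rfl⟩
      exact W.smul_mem p hw
    · intro w hw
      exact Submodule.mem_map.2 ⟨w, hw, rfl⟩
    · rw [eq_bot_iff]
      rintro x ⟨hx1, hx2⟩
      rcases Submodule.mem_map.1 hx1 with ⟨w, hw, rfl⟩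
      have : (p • w : M) = p • w := rfl
      simpa using hint _ hx2 w hw rfl
  -- Zorn's lemma
  have hchain : ∀ c ⊆ S, IsChain (· ≤ ·) c → ∀ y ∈ c, ∃ ub ∈ S, ∀ z ∈ c, z ≤ ub := by
    intro c hcS hc y hy
    refine ⟨sSup c, ⟨?_, ?_, ?_⟩, fun z hz => le_sSup hz⟩
    · exact sSup_le fun z hz => (hcS hz).1
    · intro w hw
      exact (le_sSup hy) ((hcS hy).2.1 w hw)
    · rw [eq_bot_iff]
      rintro x ⟨hx1, hx2⟩
      rcases (Submodule.mem_sSup_of_directed ⟨y, hy⟩ hc.directedOn).1 hx1 with ⟨z, hzc, hxz⟩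
      have := (hcS hzc).2.2
      have : x ∈ (⊥ : Submodule A M) := this ▸ (Submodule.mem_inf.2 ⟨hxz, hx2⟩)
      simpa using this
  obtain ⟨N, -, hNmax⟩ := zorn_le_nonempty₀ S hchain _ hbase
  obtain ⟨hNW, hpW, hNT⟩ := hNmax.1
  refine ⟨N, hNW, hNT, ?_⟩
  -- show N ⊔ T = W
  refine le_antisymm (sup_le hNW hTW) ?_
  intro w hw
  by_contra hwNT
  have hwN : w ∉ N := fun h => hwNT (Submodule.mem_sup_left h)
  -- the enlarged submodule N ⊔ A∙w
  set N' : Submodule A M := N ⊔ Submodule.span A {w} with hN'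
  have hNN' : N ≤ N' := le_sup_left
  have hwN' : w ∈ N' := Submodule.mem_sup_right (Submodule.mem_span_singleton_self w)
  have hne : ¬ (N' ∈ S) := by
    intro hmem
    exact hwN (hNmax.2 hmem (le_sup_left) hwN')
  have hN'W : N' ≤ W := sup_le hNW ((Submodule.span_singleton_le_iff_mem w W).2 hw)
  have hN'p : ∀ u ∈ W, p • u ∈ N' := fun u hu => hNN' (hpW u hu)
  have hN'T : N' ⊓ T ≠ ⊥ := fun h => hne ⟨hN'W, hN'p, h⟩
  obtain ⟨x, hxmem, hx0⟩ := Submodule.exists_mem_ne_zero_of_ne_bot hN'T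
  obtain ⟨hxN', hxT⟩ := Submodule.mem_inf.1 hxmem
  rcases Submodule.mem_sup.1 hxN' with ⟨n, hn, y, hy, rfl⟩
  rcases Submodule.mem_span_singleton.1 hy with ⟨r, rfl⟩
  by_cases hdvd : p ∣ r
  · rcases hdvd with ⟨s, rfl⟩
    have : (p * s) • w = p • (s • w) := by rw [mul_smul]
    have hmemN : (p * s) • w ∈ N := by
      rw [this]; exact hpW _ (W.smul_mem s hw)
    have : n + (p * s) • w ∈ N ⊓ T := Submodule.mem_inf.2 ⟨N.add_mem hn hmemN, hxT⟩
    rw [hNT] at this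
    exact hx0 (by simpa using this)
  · -- p and r are coprime
    obtain ⟨u, v, huv⟩ := (hp.coprime_iff_not_dvd.2 hdvd)
    have hw' : w = u • (p • w) + v • (r • w) := by
      have : ((u * p) + (v * r)) • w = w := by rw [huv, one_smul]
      conv_lhs => rw [← this]
      rw [add_smul, mul_smul, mul_smul]
    have h1 : u • (p • w) ∈ N ⊔ T := Submodule.mem_sup_left (N.smul_mem u (hpW w hw))
    have h2 : v • (r • w) ∈ N ⊔ T := by
      have : r • w = (n + r • w) + (-n) := by abel
      rw [this, smul_add]
      refine Submodule.add_mem _ (Submodule.mem_sup_right (T.smul_mem v hxT)) ?_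
      exact Submodule.mem_sup_left (N.smul_mem v (N.neg_mem hn))
    exact hwNT (hw' ▸ Submodule.add_mem _ h1 h2)

/-- Main induction: if `T ≤ W` is pure in `W` and annihilated by a nonzero `a`, then `T`
has a complement in `W`. -/
lemma kaplansky_main (a : A) (ha : a ≠ 0) (T W : Submodule A M) (hTW : T ≤ W)
    (hpure : ∀ r : A, ∀ x ∈ T, ∀ w ∈ W, x = r • w → ∃ t ∈ T, x = r • t)
    (hkill : ∀ t ∈ T, a • t = 0) :
    ∃ N ≤ W, N ⊓ T = ⊥ ∧ N ⊔ T = W := by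
  induction a using UniqueFactorizationMonoid.induction_on_prime generalizing T W with
  | h₁ => exact absurd rfl ha
  | h₂ u hu =>
    -- unit case : T = ⊥
    have hT : T = ⊥ := by
      rw [eq_bot_iff]
      intro t ht
      rcases hu with ⟨u, rfl⟩
      have h0 : (u : A) • t = 0 := hkill t ht
      have : ((u⁻¹ : Aˣ) : A) • ((u : A) • t) = t := by
        rw [← mul_smul, Units.inv_mul, one_smul]
      rw [h0, smul_zero] at this
      simp [← this]
    refine ⟨W, le_rfl, ?_, ?_⟩ <;> rw [hT] <;> simp
  | h₃ c p hc hp ih =>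
    -- a = p * c
    -- T' = p • T, W' = p • W
    set T' : Submodule A M := T.map (LinearMap.lsmul A M p) with hT'
    set W' : Submodule A M := W.map (LinearMap.lsmul A M p) with hW'
    have mem_T' : ∀ x, x ∈ T' ↔ ∃ t ∈ T, x = p • t := by
      intro x
      simp only [hT', Submodule.mem_map, LinearMap.lsmul_apply]
      exact ⟨fun ⟨t, ht, h⟩ => ⟨t, ht, h.symm⟩, fun ⟨t, ht, h⟩ => ⟨t, ht, h.symm⟩⟩
    have mem_W' : ∀ x, x ∈ W' ↔ ∃ w ∈ W, x = p • w := by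
      intro x
      simp only [hW', Submodule.mem_map, LinearMap.lsmul_apply]
      exact ⟨fun ⟨t, ht, h⟩ => ⟨t, ht, h.symm⟩, fun ⟨t, ht, h⟩ => ⟨t, ht, h.symm⟩⟩
    have hT'T : T' ≤ T := by
      intro x hx; rcases (mem_T' x).1 hx with ⟨t, ht, rfl⟩; exact T.smul_mem p ht
    have hT'W' : T' ≤ W' := by
      intro x hx
      rcases (mem_T' x).1 hx with ⟨t, ht, rfl⟩
      exact (mem_W' _).2 ⟨t, hTW ht, rfl⟩
    -- purity of T' in W'
    have hpure' : ∀ r : A, ∀ x ∈ T', ∀ w ∈ W', x = r • w → ∃ t ∈ T', x = r • t := by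
      intro r x hx w hw hxw
      rcases (mem_W' w).1 hw with ⟨w₀, hw₀, rfl⟩
      have hxT : x ∈ T := hT'T hx
      have : x = (r * p) • w₀ := by rw [mul_smul, hxw]
      rcases hpure (r * p) x hxT w₀ hw₀ this with ⟨t, ht, hxt⟩
      refine ⟨p • t, (mem_T' _).2 ⟨t, ht, rfl⟩, ?_⟩
      rw [hxt, mul_smul, smul_comm]
    -- c annihilates T'
    have hkill' : ∀ t ∈ T', c • t = 0 := by
      intro x hx
      rcases (mem_T' x).1 hx with ⟨t, ht, rfl⟩
      have h1 : c • p • t = (p * c) • t := by rw [mul_comm, mul_smul]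
      rw [h1]
      exact hkill t ht
    obtain ⟨N₀, hN₀W', hN₀T', hN₀sup⟩ := ih hc T' W' hT'W' hpure' hkill'
    -- M' = {w ∈ W | p • w ∈ N₀}
    set M' : Submodule A M := W ⊓ N₀.comap (LinearMap.lsmul A M p) with hM'
    have mem_M' : ∀ x, x ∈ M' ↔ x ∈ W ∧ p • x ∈ N₀ := by
      intro x
      simp [hM', Submodule.mem_inf, Submodule.mem_comap, LinearMap.lsmul_apply]
    -- Tp = T ∩ ker(p)
    set Tp : Submodule A M := T ⊓ LinearMap.ker (LinearMap.lsmul A M p) with hTp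
    have mem_Tp : ∀ x, x ∈ Tp ↔ x ∈ T ∧ p • x = 0 := by
      intro x
      simp [hTp, Submodule.mem_inf, LinearMap.mem_ker, LinearMap.lsmul_apply]
    -- T ⊓ M' = Tp
    have hTM' : T ⊓ M' = Tp := by
      ext x
      rw [Submodule.mem_inf, mem_M', mem_Tp]
      constructor
      · rintro ⟨hxT, hxW, hxN₀⟩
        refine ⟨hxT, ?_⟩
        have hpx : p • x ∈ T' := (mem_T' _).2 ⟨x, hxT, rfl⟩
        have : p • x ∈ N₀ ⊓ T' := Submodule.mem_inf.2 ⟨hxN₀, hpx⟩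
        rw [hN₀T'] at this
        simpa using this
      · rintro ⟨hxT, hpx⟩
        exact ⟨hxT, hTW hxT, by rw [hpx]; exact N₀.zero_mem⟩
    -- T ⊔ M' = W
    have hTsupM' : T ⊔ M' = W := by
      refine le_antisymm (sup_le hTW inf_le_left) ?_
      intro w hw
      have hpw : p • w ∈ W' := (mem_W' _).2 ⟨w, hw, rfl⟩
      rw [← hN₀sup] at hpw
      rcases Submodule.mem_sup.1 hpw with ⟨n₀, hn₀, y, hy, hsum⟩
      rcases (mem_T' y).1 hy with ⟨t, ht, rfl⟩
      have hwt : w - t ∈ M' := by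
        rw [mem_M']
        refine ⟨W.sub_mem hw (hTW ht), ?_⟩
        have : p • (w - t) = n₀ := by rw [smul_sub, ← hsum]; abel
        rw [this]; exact hn₀
      have : w = t + (w - t) := by abel
      rw [this]
      exact Submodule.add_mem _ (Submodule.mem_sup_left ht) (Submodule.mem_sup_right hwt)
    -- apply the base case to Tp ≤ M'
    have hTpM' : Tp ≤ M' := by
      intro x hx
      rcases (mem_Tp x).1 hx with ⟨hxT, hpx⟩
      rw [mem_M']
      exact ⟨hTW hxT, by rw [hpx]; exact N₀.zero_mem⟩
    have hTpkill : ∀ t ∈ Tp, p • t = 0 := fun t ht => ((mem_Tp t).1 ht).2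
    have hTpint : ∀ x ∈ Tp, ∀ w ∈ M', x = p • w → x = 0 := by
      intro x hx w hw hxw
      rcases (mem_Tp x).1 hx with ⟨hxT, -⟩
      rcases (mem_M' w).1 hw with ⟨hwW, hwN₀⟩
      have hxT' : x ∈ T' := by
        rcases hpure p x hxT w hwW hxw with ⟨t, ht, hxt⟩
        exact (mem_T' x).2 ⟨t, ht, hxt⟩
      have : x ∈ N₀ ⊓ T' := Submodule.mem_inf.2 ⟨by rw [hxw]; exact hwN₀, hxT'⟩
      rw [hN₀T'] at this
      simpa using this
    obtain ⟨N, hNM', hNTp, hNsup⟩ := kaplansky_base p hp Tp M' hTpM' hTpkill hTpint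
    refine ⟨N, hNM'.trans inf_le_left, ?_, ?_⟩
    · -- N ⊓ T = ⊥
      rw [eq_bot_iff]
      rintro x hx
      rcases Submodule.mem_inf.1 hx with ⟨hxN, hxT⟩
      have hxM' : x ∈ M' := hNM' hxN
      have hxTp : x ∈ Tp := hTM' ▸ Submodule.mem_inf.2 ⟨hxT, hxM'⟩
      have : x ∈ N ⊓ Tp := Submodule.mem_inf.2 ⟨hxN, hxTp⟩
      rw [hNTp] at this
      simpa using this
    · -- N ⊔ T = W
      refine le_antisymm (sup_le (hNM'.trans (inf_le_left.trans le_rfl)) hTW) ?_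
      have h1 : M' ≤ N ⊔ T := by
        rw [← hNsup]
        exact sup_le le_sup_left (le_trans (le_trans inf_le_left le_sup_right) le_rfl)
      calc W = T ⊔ M' := hTsupM'.symm
        _ ≤ T ⊔ (N ⊔ T) := sup_le_sup_left h1 T
        _ = N ⊔ T := by rw [sup_comm T (N ⊔ T), sup_assoc, sup_idem]

end Aux

/-- Kaplansky: over a principal ideal domain `A`, if the torsion
submodule of an `A`-module `M` is annihilated by a single nonzero `a ∈ A` (bounded
order), then it is a direct summand of `M`; hence `M ≅ Tor(M) ⊕ M/Tor(M)`. -/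
theorem torsion_bounded_order_is_direct_summand
    (A M : Type) [CommRing A] [IsDomain A] [IsPrincipalIdealRing A]
    [AddCommGroup M] [Module A M] (a : A) (ha : a ≠ 0)
    (hann : ∀ m ∈ Submodule.torsion A M, a • m = 0) :
    (∃ N : Submodule A M, IsCompl (Submodule.torsion A M) N) ∧
    Nonempty (M ≃ₗ[A] (↥(Submodule.torsion A M) × (M ⧸ Submodule.torsion A M))) := by
  set T := Submodule.torsion A M with hT
  have hpure : ∀ r : A, ∀ x ∈ T, ∀ w ∈ (⊤ : Submodule A M), x = r • w → ∃ t ∈ T, x = r • t := by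
    intro r x hx w _ hxw
    by_cases hr : r = 0
    · exact ⟨0, T.zero_mem, by rw [hxw, hr, zero_smul, zero_smul]⟩
    · -- w is itself torsion
      rcases hx with ⟨⟨s, hs⟩, hsx⟩
      have hsx' : s • x = 0 := hsx
      have hsw : (s * r) • w = 0 := by
        rw [mul_smul, ← hxw]; exact hsx'
      have hsr : s * r ∈ nonZeroDivisors A := by
        refine mul_mem hs (mem_nonZeroDivisors_iff_ne_zero.2 hr)
      exact ⟨w, ⟨⟨s * r, hsr⟩, hsw⟩, hxw⟩
  obtain ⟨N, -, hNT, hNsup⟩ :=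
    kaplansky_main a ha T ⊤ le_top hpure (fun t ht => hann t ht)
  have hcompl : IsCompl T N := by
    constructor
    · rw [disjoint_iff, inf_comm]; exact hNT
    · rw [codisjoint_iff, sup_comm]; exact hNsup
  refine ⟨⟨N, hcompl⟩, ⟨?_⟩⟩
  exact (Submodule.prodEquivOfIsCompl T N hcompl).symm.trans
    ((LinearEquiv.refl A T).prodCongr (Submodule.quotientEquivOfIsCompl T N hcompl).symm)
end

section
/- Let A = Frac(Z[x_1,x_2])[q^{±1}] and let B be the A-subalgebra (A-submodule) of Frac(A) generated by {1/[n] : n ≥ 1} where [n] = (q^{2n}-q^{-2n})/(q²-q^{-2}). Then B is not a free A-module. -/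
set_option synthInstance.maxHeartbeats 1000000
set_option maxHeartbeats 2000000

/-- The ground ring `A = Frac(ℤ[x₁,x₂])[q^{±1}]`. -/
noncomputable abbrev Afield : Type := FractionRing (MvPolynomial (Fin 2) ℤ)
noncomputable abbrev Aring : Type := LaurentPolynomial Afield

/-- The balanced quantum integer `[k] = ∑_{j=0}^{k-1} q^(2k-2-4j)` viewed in `A`. -/
noncomputable def qintA (k : ℕ) : Aring :=
  ∑ j ∈ Finset.range k, LaurentPolynomial.T (2 * (k : ℤ) - 2 - 4 * (j : ℤ))

/-- The `A`-submodule `B` of `Frac(A)` generated by the inverses `1/[n]`, `n ≥ 1`. -/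
noncomputable def Bmod : Submodule Aring (FractionRing Aring) :=
  Submodule.span Aring
    {x : FractionRing Aring | ∃ n : ℕ, 1 ≤ n ∧ x = (algebraMap Aring (FractionRing Aring) (qintA n))⁻¹}

open Polynomial LaurentPolynomial

/-- The polynomial `∑_{j<m} X^{4j}` such that `[m] = T^{2-2m} · qpoly m`. -/
noncomputable def qpoly (m : ℕ) : Polynomial Afield :=
  ∑ j ∈ Finset.range m, X ^ (4 * j)

lemma qpoly_coeff_zero {m : ℕ} (hm : 1 ≤ m) : (qpoly m).coeff 0 = 1 := by
  rw [qpoly, Polynomial.finset_sum_coeff, Finset.sum_eq_single 0]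
  · simp
  · intro j hj hj0
    rw [Polynomial.coeff_X_pow]
    simp only [ite_eq_right_iff]
    intro h; omega
  · intro h; exact absurd (Finset.mem_range.mpr (by omega)) h

lemma qpoly_ne_zero {m : ℕ} (hm : 1 ≤ m) : qpoly m ≠ 0 := by
  intro h
  have := qpoly_coeff_zero hm
  rw [h] at this
  simp at this

lemma qpoly_natDegree_ge {m : ℕ} (hm : 1 ≤ m) : 4 * (m - 1) ≤ (qpoly m).natDegree := by
  apply Polynomial.le_natDegree_of_ne_zero
  rw [qpoly, Polynomial.finset_sum_coeff, Finset.sum_eq_single (m - 1)]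
  · simp
  · intro j hj hj0
    rw [Polynomial.coeff_X_pow]
    simp only [ite_eq_right_iff]
    intro h; omega
  · intro h; exact absurd (Finset.mem_range.mpr (by omega)) h

lemma qintA_eq (m : ℕ) :
    qintA m = T (2 - 2 * (m : ℤ)) * Polynomial.toLaurent (qpoly m) := by
  rw [qpoly, qintA, map_sum, Finset.mul_sum, ← Finset.sum_range_reflect]
  refine Finset.sum_congr rfl fun j hj => ?_
  rw [Polynomial.toLaurent_X_pow, ← T_add]
  congr 1
  rw [Finset.mem_range] at hj
  omega

lemma toLaurent_qpoly (m : ℕ) :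
    Polynomial.toLaurent (qpoly m) = T (2 * (m : ℤ) - 2) * qintA m := by
  rw [qintA_eq, ← mul_assoc, ← T_add,
    show 2 * (m : ℤ) - 2 + (2 - 2 * m) = 0 by ring, T_zero, one_mul]

lemma qintA_ne_zero {m : ℕ} (hm : 1 ≤ m) : qintA m ≠ 0 := by
  intro h
  have h2 : Polynomial.toLaurent (qpoly m) = 0 := by
    rw [toLaurent_qpoly, h, mul_zero]
  rw [Polynomial.toLaurent_eq_zero] at h2
  exact qpoly_ne_zero hm h2

lemma qintA_one : qintA 1 = 1 := by
  simp [qintA]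

/-- Key lemma: no nonzero element of `A` is divisible by every `[m]`. -/
lemma no_universal_denominator (a : Aring) (ha : a ≠ 0)
    (hdvd : ∀ m : ℕ, 1 ≤ m → qintA m ∣ a) : False := by
  obtain ⟨N, g, hg⟩ := LaurentPolynomial.exists_T_pow a
  have hgne : g ≠ 0 := by
    intro h
    rw [h, Polynomial.toLaurent_eq_zero.mpr rfl] at hg
    exact (mul_ne_zero ha (isUnit_T (N : ℤ)).ne_zero) hg.symm
  set m : ℕ := g.natDegree + 2 with hm
  obtain ⟨c, hc⟩ := hdvd m (by omega)
  obtain ⟨n, h, hh⟩ := LaurentPolynomial.exists_T_pow c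
  have key : qpoly m * h * X ^ N = g * X ^ (2 * m - 2 + n) := by
    apply Polynomial.toLaurent_injective
    rw [map_mul, map_mul, map_mul, Polynomial.toLaurent_X_pow,
      Polynomial.toLaurent_X_pow, toLaurent_qpoly, hh, hg, hc]
    rw [show ((2 * m - 2 + n : ℕ) : ℤ) = (2 * (m : ℤ) - 2) + (n : ℤ) by
      push_cast [Nat.cast_sub (by omega : 2 ≤ 2 * m)]; ring]
    rw [T_add]
    ring
  have hdvd2 : qpoly m ∣ g * X ^ (2 * m - 2 + n) := ⟨h * X ^ N, by rw [← key]; ring⟩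
  haveI : IsPrincipalIdealRing (Polynomial Afield) := EuclideanDomain.to_principal_ideal_domain
  haveI : IsBezout (Polynomial Afield) := IsBezout.of_isPrincipalIdealRing _
  have hcop : IsCoprime (qpoly m) (X ^ (2 * m - 2 + n) : Polynomial Afield) := by
    refine IsCoprime.pow_right ?_
    refine ((Polynomial.prime_X.coprime_iff_not_dvd).mpr ?_).symm
    rw [Polynomial.X_dvd_iff, qpoly_coeff_zero (by omega : 1 ≤ m)]
    exact one_ne_zero
  have hdvdg : qpoly m ∣ g := hcop.dvd_of_dvd_mul_right hdvd2
  have hdeg := Polynomial.natDegree_le_of_dvd hdvdg hgne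
  have := qpoly_natDegree_ge (m := m) (by omega)
  omega

lemma smul_eq_algebraMap_mul (r : Aring) (x : FractionRing Aring) :
    r • x = algebraMap Aring (FractionRing Aring) r * x := by
  rw [← algebraMap_smul (FractionRing Aring) r x, smul_eq_mul]

/-- the `A`-module obtained by adjoining all `1/[n]`, `n ≥ 1`, to
`A = Frac(ℤ[x₁,x₂])[q^{±1}]` is not a free `A`-module. -/
theorem Bmod_not_free : ¬ Module.Free Aring ↥Bmod := by
  intro hfree
  letI fF : Field (FractionRing Aring) := inferInstance
  haveI hnzd : NoZeroDivisors (FractionRing Aring) := by infer_instance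
  have halginj : Function.Injective (algebraMap Aring (FractionRing Aring)) :=
    IsFractionRing.injective Aring (FractionRing Aring)
  have hone : (1 : FractionRing Aring) ∈ Bmod := by
    apply Submodule.subset_span
    refine ⟨1, le_refl 1, ?_⟩
    rw [qintA_one, map_one]
    exact inv_one.symm
  have hmem : ∀ m : ℕ, 1 ≤ m →
      (algebraMap Aring (FractionRing Aring) (qintA m))⁻¹ ∈ Bmod := fun m hm =>
    Submodule.subset_span ⟨m, hm, rfl⟩
  letI := hfree
  let b : Module.Basis (Module.Free.ChooseBasisIndex Aring ↥Bmod) Aring ↥Bmod :=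
    Module.Free.chooseBasis Aring ↥Bmod
  haveI : Nontrivial ↥Bmod := by
    refine ⟨⟨1, hone⟩, 0, fun h => ?_⟩
    exact one_ne_zero (congrArg Subtype.val h)
  haveI hne : Nonempty (Module.Free.ChooseBasisIndex Aring ↥Bmod) := b.index_nonempty
  haveI hss : Subsingleton (Module.Free.ChooseBasisIndex Aring ↥Bmod) := by
    refine ⟨fun i j => by_contra fun hij => ?_⟩
    have hbi : ((b i : ↥Bmod) : FractionRing Aring) ≠ 0 := fun h => b.ne_zero i (Subtype.ext h)
    have hbj : ((b j : ↥Bmod) : FractionRing Aring) ≠ 0 := fun h => b.ne_zero j (Subtype.ext h)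
    obtain ⟨⟨n₁, d₁⟩, h₁⟩ := IsLocalization.surj (nonZeroDivisors Aring)
      ((b i : ↥Bmod) : FractionRing Aring)
    obtain ⟨⟨n₂, d₂⟩, h₂⟩ := IsLocalization.surj (nonZeroDivisors Aring)
      ((b j : ↥Bmod) : FractionRing Aring)
    have hd₁ : algebraMap Aring (FractionRing Aring) (d₁ : Aring) ≠ 0 := fun hh =>
      nonZeroDivisors.ne_zero d₁.2 (halginj (by rw [hh, map_zero]))
    have hd₂ : algebraMap Aring (FractionRing Aring) (d₂ : Aring) ≠ 0 := fun hh =>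
      nonZeroDivisors.ne_zero d₂.2 (halginj (by rw [hh, map_zero]))
    have hn₁ : n₁ ≠ 0 := by
      intro h
      rw [h, map_zero] at h₁
      exact hbi ((mul_eq_zero.mp h₁).resolve_right hd₁)
    have hn₂ : n₂ ≠ 0 := by
      intro h
      rw [h, map_zero] at h₂
      exact hbj ((mul_eq_zero.mp h₂).resolve_right hd₂)
    have heq : ((d₁ : Aring) * n₂) • (b i) = ((d₂ : Aring) * n₁) • (b j) := by
      apply Subtype.ext
      show ((d₁ : Aring) * n₂) • ((b i : ↥Bmod) : FractionRing Aring)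
          = ((d₂ : Aring) * n₁) • ((b j : ↥Bmod) : FractionRing Aring)
      rw [smul_eq_algebraMap_mul, smul_eq_algebraMap_mul]
      calc algebraMap Aring (FractionRing Aring) ((d₁ : Aring) * n₂)
            * ((b i : ↥Bmod) : FractionRing Aring)
          = algebraMap Aring (FractionRing Aring) n₂
            * (((b i : ↥Bmod) : FractionRing Aring)
              * algebraMap Aring (FractionRing Aring) (d₁ : Aring)) := by rw [map_mul]; ring
        _ = algebraMap Aring (FractionRing Aring) n₂
            * algebraMap Aring (FractionRing Aring) n₁ := by rw [h₁]
        _ = algebraMap Aring (FractionRing Aring) n₁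
            * (((b j : ↥Bmod) : FractionRing Aring)
              * algebraMap Aring (FractionRing Aring) (d₂ : Aring)) := by
            rw [h₂]; ring
        _ = algebraMap Aring (FractionRing Aring) ((d₂ : Aring) * n₁)
            * ((b j : ↥Bmod) : FractionRing Aring) := by rw [map_mul]; ring
    have hrepr : ((d₁ : Aring) * n₂) • (Finsupp.single i (1 : Aring))
        = ((d₂ : Aring) * n₁) • (Finsupp.single j (1 : Aring)) := by
      have := congrArg b.repr heq
      rwa [map_smul, map_smul, b.repr_self, b.repr_self] at this
    have hfun := congrArg (fun f => f i) hrepr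
    simp only [Finsupp.smul_single, smul_eq_mul, mul_one, Finsupp.single_eq_same,
      Finsupp.single_eq_of_ne hij] at hfun
    exact mul_ne_zero (nonZeroDivisors.ne_zero d₁.2) hn₂ hfun
  obtain ⟨i₀⟩ := hne
  have hrep : ∀ y : ↥Bmod, y = (b.repr y i₀) • b i₀ := by
    intro y
    have h1 : b.repr y = Finsupp.single i₀ (b.repr y i₀) := by
      ext j
      rw [Subsingleton.elim j i₀, Finsupp.single_eq_same]
    calc y = b.repr.symm (b.repr y) := (b.repr.symm_apply_apply y).symm
      _ = b.repr.symm (Finsupp.single i₀ (b.repr y i₀)) := by rw [← h1]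
      _ = (b.repr y i₀) • b i₀ := b.repr_symm_single _ _
  have hcyc : ∀ x : FractionRing Aring, x ∈ Bmod → ∃ a : Aring,
      x = algebraMap Aring (FractionRing Aring) a * ((b i₀ : ↥Bmod) : FractionRing Aring) := by
    intro x hx
    refine ⟨b.repr ⟨x, hx⟩ i₀, ?_⟩
    have h2 := congrArg Subtype.val (hrep ⟨x, hx⟩)
    have h3 : x = (b.repr ⟨x, hx⟩ i₀) • ((b i₀ : ↥Bmod) : FractionRing Aring) := h2
    rwa [smul_eq_algebraMap_mul] at h3
  obtain ⟨a₀, ha₀⟩ := hcyc 1 hone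
  have ha₀ne : a₀ ≠ 0 := by
    intro h
    rw [h, map_zero, zero_mul] at ha₀
    exact one_ne_zero ha₀
  refine no_universal_denominator a₀ ha₀ne fun m hm => ?_
  obtain ⟨am, ham⟩ := hcyc _ (hmem m hm)
  have hqne : algebraMap Aring (FractionRing Aring) (qintA m) ≠ 0 := fun hh =>
    qintA_ne_zero hm (halginj (by rw [hh, map_zero]))
  have hkey : algebraMap Aring (FractionRing Aring) (qintA m * am)
      = algebraMap Aring (FractionRing Aring) a₀ := by
    rw [map_mul]
    calc algebraMap Aring (FractionRing Aring) (qintA m) * algebraMap Aring (FractionRing Aring) am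
        = algebraMap Aring (FractionRing Aring) (qintA m)
          * algebraMap Aring (FractionRing Aring) am * 1 := by ring
      _ = algebraMap Aring (FractionRing Aring) (qintA m) * algebraMap Aring (FractionRing Aring) am
          * (algebraMap Aring (FractionRing Aring) a₀ * ((b i₀ : ↥Bmod) : FractionRing Aring)) := by
          rw [← ha₀]
      _ = algebraMap Aring (FractionRing Aring) a₀
          * (algebraMap Aring (FractionRing Aring) (qintA m)
            * (algebraMap Aring (FractionRing Aring) am
              * ((b i₀ : ↥Bmod) : FractionRing Aring))) := by ring
      _ = algebraMap Aring (FractionRing Aring) a₀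
          * (algebraMap Aring (FractionRing Aring) (qintA m)
            * (algebraMap Aring (FractionRing Aring) (qintA m))⁻¹) := by rw [← ham]
      _ = algebraMap Aring (FractionRing Aring) a₀ := by rw [mul_inv_cancel₀ hqne, mul_one]
  exact ⟨am, (halginj hkey).symm⟩
end
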